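/- arXiv:2004.01889 — 12 statements merged into one kernel-verified Lean document; each statement's English description precedes it below -/
import Mathlib

section
/- For integers m1, m2, n1, n2 ≥ 0, the set S of triples (a,b,c) of non-negative integers satisfying a ≤ min(m1,n1), c ≤ min(m2,n2), a+b+c ≤ min(m1+m2, n1+n2), 2a+b ≤ m1+n1, and 2c+b ≤ m2+n2 has the same cardinality as the set T of triples (a,b,c) of non-negative integers satisfying b ≤ min(m2,n1), a+b−c ≤ n1, b+c−a ≤ m2, c ≤ n2, a ≤ m1, 2a+b−c ≤ m1+n1, and 2c+b−a ≤ m2+n2. -/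
/-!
In the coordinates `u = a + b`, `v = b + c` and `b`, both sets are fibred over `(u, v)` with
fibres that are integer intervals in `b`: the fibre of `S` is `[L(u, v), min u v]` for an explicit
`L`, and the fibre of `T` is `[max 0 (u - m1) (v - n2), min u v m2 n1 (n1 + v - u) (m2 + u - v)]`,
cut out further by `2u - v ≤ m1 + n1` and `2v - u ≤ m2 + n2`. Over each `(u, v)` the two fibres
have the same length, so translating along `(1, -1, 1)`, which fixes `u` and `v`, by the
difference of their upper ends maps `S` bijectively onto `T`.
-/

def shear (t : ℤ → ℤ → ℤ) : ℤ × ℤ × ℤ ≃ ℤ × ℤ × ℤ where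
  toFun p := (p.1 + t (p.1 + p.2.1) (p.2.1 + p.2.2), p.2.1 - t (p.1 + p.2.1) (p.2.1 + p.2.2),
    p.2.2 + t (p.1 + p.2.1) (p.2.1 + p.2.2))
  invFun p := (p.1 - t (p.1 + p.2.1) (p.2.1 + p.2.2), p.2.1 + t (p.1 + p.2.1) (p.2.1 + p.2.2),
    p.2.2 - t (p.1 + p.2.1) (p.2.1 + p.2.2))
  left_inv p := by simp
  right_inv p := by simp

theorem Set.ncard_preimage_equiv {α β : Type*} (e : α ≃ β) (s : Set β) :
    (e ⁻¹' s).ncard = s.ncard :=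
  Set.ncard_preimage_of_injective_subset_range e.injective (by simp)

section A2

variable (m1 m2 n1 n2 : ℤ)

def fusionSet : Set (ℤ × ℤ × ℤ) :=
  {p | 0 ≤ p.1 ∧ 0 ≤ p.2.1 ∧ 0 ≤ p.2.2 ∧
    p.1 ≤ min m1 n1 ∧ p.2.2 ≤ min m2 n2 ∧
    p.1 + p.2.1 + p.2.2 ≤ min (m1 + m2) (n1 + n2) ∧
    2 * p.1 + p.2.1 ≤ m1 + n1 ∧ 2 * p.2.2 + p.2.1 ≤ m2 + n2}

def pakVallejoSet : Set (ℤ × ℤ × ℤ) :=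
  {p | 0 ≤ p.1 ∧ 0 ≤ p.2.1 ∧ 0 ≤ p.2.2 ∧
    p.2.1 ≤ min m2 n1 ∧ p.1 + p.2.1 - p.2.2 ≤ n1 ∧ p.2.1 + p.2.2 - p.1 ≤ m2 ∧
    p.2.2 ≤ n2 ∧ p.1 ≤ m1 ∧
    2 * p.1 + p.2.1 - p.2.2 ≤ m1 + n1 ∧ 2 * p.2.2 + p.2.1 - p.1 ≤ m2 + n2}

/-- The distance from the upper end `min u v` of the fibre of `fusionSet` over `(u, v)` down to
the upper end of the fibre of `pakVallejoSet`. -/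
def fibreShift (u v : ℤ) : ℤ :=
  min u v - min (min u v) (min (min m2 n1) (min (n1 + v - u) (m2 + u - v)))

theorem shear_fibreShift_mem_pakVallejoSet_iff (p : ℤ × ℤ × ℤ) :
    shear (fibreShift m2 n1) p ∈ pakVallejoSet m1 m2 n1 n2 ↔ p ∈ fusionSet m1 m2 n1 n2 := by
  obtain ⟨a, b, c⟩ := p
  simp only [shear, fibreShift, pakVallejoSet, fusionSet, Equiv.coe_fn_mk, Set.mem_ofPred_eq]
  omega

theorem ncard_fusionSet_eq_ncard_pakVallejoSet :
    (fusionSet m1 m2 n1 n2).ncard = (pakVallejoSet m1 m2 n1 n2).ncard := by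
  have hpre : shear (fibreShift m2 n1) ⁻¹' pakVallejoSet m1 m2 n1 n2 = fusionSet m1 m2 n1 n2 :=
    Set.ext (shear_fibreShift_mem_pakVallejoSet_iff m1 m2 n1 n2)
  rw [← hpre, Set.ncard_preimage_equiv]

end A2

theorem stmt_0_general (m1 m2 n1 n2 : ℤ) :
    Set.ncard {p : ℤ × ℤ × ℤ | 0 ≤ p.1 ∧ 0 ≤ p.2.1 ∧ 0 ≤ p.2.2 ∧
        p.1 ≤ min m1 n1 ∧ p.2.2 ≤ min m2 n2 ∧
        p.1 + p.2.1 + p.2.2 ≤ min (m1 + m2) (n1 + n2) ∧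
        2 * p.1 + p.2.1 ≤ m1 + n1 ∧ 2 * p.2.2 + p.2.1 ≤ m2 + n2} =
    Set.ncard {p : ℤ × ℤ × ℤ | 0 ≤ p.1 ∧ 0 ≤ p.2.1 ∧ 0 ≤ p.2.2 ∧
        p.2.1 ≤ min m2 n1 ∧ p.1 + p.2.1 - p.2.2 ≤ n1 ∧ p.2.1 + p.2.2 - p.1 ≤ m2 ∧
        p.2.2 ≤ n2 ∧ p.1 ≤ m1 ∧
        2 * p.1 + p.2.1 - p.2.2 ≤ m1 + n1 ∧ 2 * p.2.2 + p.2.1 - p.1 ≤ m2 + n2} :=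
  ncard_fusionSet_eq_ncard_pakVallejoSet m1 m2 n1 n2

/-- Type A2: the fusion polytope lattice set S has the same cardinality as the
Pak–Vallejo set T. -/
theorem stmt_0 (m1 m2 n1 n2 : ℤ) (hm1 : 0 ≤ m1) (hm2 : 0 ≤ m2)
    (hn1 : 0 ≤ n1) (hn2 : 0 ≤ n2) :
    Set.ncard {p : ℤ × ℤ × ℤ | 0 ≤ p.1 ∧ 0 ≤ p.2.1 ∧ 0 ≤ p.2.2 ∧
        p.1 ≤ min m1 n1 ∧ p.2.2 ≤ min m2 n2 ∧
        p.1 + p.2.1 + p.2.2 ≤ min (m1 + m2) (n1 + n2) ∧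
        2 * p.1 + p.2.1 ≤ m1 + n1 ∧ 2 * p.2.2 + p.2.1 ≤ m2 + n2} =
    Set.ncard {p : ℤ × ℤ × ℤ | 0 ≤ p.1 ∧ 0 ≤ p.2.1 ∧ 0 ≤ p.2.2 ∧
        p.2.1 ≤ min m2 n1 ∧ p.1 + p.2.1 - p.2.2 ≤ n1 ∧ p.2.1 + p.2.2 - p.1 ≤ m2 ∧
        p.2.2 ≤ n2 ∧ p.1 ≤ m1 ∧
        2 * p.1 + p.2.1 - p.2.2 ≤ m1 + n1 ∧ 2 * p.2.2 + p.2.1 - p.1 ≤ m2 + n2} :=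
  stmt_0_general m1 m2 n1 n2
end

section
/- Let m1,m2,n1,n2 ≥ 0 with min(m2,n2) > 0. Define ²T(m1,m2,n1,n2) ⊂ Z_+^4 as the disjoint union of the four sets: {(0,b,0,d) : d ≤ n2, b ≤ n1, d+b ≤ m2}, {(a,0,0,d) : 1 ≤ a ≤ m1, d ≤ n2, d−a ≤ m2, a−2d ≤ n1}, {(0,b,c,0) : c ≥ 1, c+b ≤ m2, b+2c ≤ n1}, and {(a,0,c,0) : 1 ≤ a ≤ m1, 1 ≤ c ≤ m2, a+2c ≤ n1}. Then |²T(m1,m2,n1,n2)| = |²T(m1,m2−1,n1,n2−1)| + min(2(m1+m2), 2(n1+n2), m1+n1) + 1. -/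
/-!
Shrinking `(m2, n2)` to `(m2 - 1, n2 - 1)` only loses the points of `²T` on its outer boundary,
and these form one lattice path `t ↦ T2boundaryPath m2 n2 t`. As `t` increases it runs along the
edge `c = m2` of the fourth piece, the edge `c + b = m2` of the third, the edges `d + b = m2`
and `d = n2` of the first, and the edge `d = n2` of the second. The remaining inequalities cut
out the parameter interval `[max (-(m1 + m2)) (m2 - n1), min (m1 + m2) (m2 + n1 + 2 n2)]`, whose
length `min (m1 + m2) (m2 + n1 + 2 n2) + min (m1 + m2) (n1 - m2)` equals
`min (2 (m1 + m2)) (2 (n1 + n2)) (m1 + n1)`.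
-/

/-- The reduced Berenstein–Zelevinsky set ²T^C for type C2, as a disjoint union
of four sets of quadruples (a,b,c,d). -/
def T2set (m1 m2 n1 n2 : ℤ) : Set (ℤ × ℤ × ℤ × ℤ) :=
  {p | (p.1 = 0 ∧ p.2.2.1 = 0 ∧ 0 ≤ p.2.1 ∧ 0 ≤ p.2.2.2 ∧
          p.2.2.2 ≤ n2 ∧ p.2.1 ≤ n1 ∧ p.2.2.2 + p.2.1 ≤ m2) ∨
       (p.2.1 = 0 ∧ p.2.2.1 = 0 ∧ 1 ≤ p.1 ∧ p.1 ≤ m1 ∧ 0 ≤ p.2.2.2 ∧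
          p.2.2.2 ≤ n2 ∧ p.2.2.2 - p.1 ≤ m2 ∧ p.1 - 2 * p.2.2.2 ≤ n1) ∨
       (p.1 = 0 ∧ p.2.2.2 = 0 ∧ 0 ≤ p.2.1 ∧ 1 ≤ p.2.2.1 ∧
          p.2.2.1 + p.2.1 ≤ m2 ∧ p.2.1 + 2 * p.2.2.1 ≤ n1) ∨
       (p.2.1 = 0 ∧ p.2.2.2 = 0 ∧ 1 ≤ p.1 ∧ p.1 ≤ m1 ∧ 1 ≤ p.2.2.1 ∧
          p.2.2.1 ≤ m2 ∧ p.1 + 2 * p.2.2.1 ≤ n1)}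

lemma T2set_finite (m1 m2 n1 n2 : ℤ) : (T2set m1 m2 n1 n2).Finite := by
  refine ((Set.finite_Icc 0 (max m1 0)).prod ((Set.finite_Icc 0 (max (max n1 m2) 0)).prod
    ((Set.finite_Icc 0 (max m2 0)).prod (Set.finite_Icc 0 (max n2 0))))).subset ?_
  rintro ⟨a, b, c, d⟩ hp
  simp only [T2set, Set.mem_ofPred_eq, Set.mem_prod, Set.mem_Icc] at hp ⊢
  omega

lemma T2set_mono {m1 m2 n1 n2 m1' m2' n1' n2' : ℤ} (hm1 : m1 ≤ m1') (hm2 : m2 ≤ m2')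
    (hn1 : n1 ≤ n1') (hn2 : n2 ≤ n2') : T2set m1 m2 n1 n2 ⊆ T2set m1' m2' n1' n2' := by
  rintro ⟨a, b, c, d⟩ hp
  simp only [T2set, Set.mem_ofPred_eq] at hp ⊢
  omega

def T2boundaryPath (m2 n2 t : ℤ) : ℤ × ℤ × ℤ × ℤ :=
  (max 0 (|t| - m2), max 0 (m2 - |t|), min (max (-t) 0) m2, min (max t 0) n2)

lemma T2boundaryPath_injective {m2 : ℤ} (hm2 : 0 < m2) (n2 : ℤ) :
    Function.Injective (T2boundaryPath m2 n2) := by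
  intro s t hst
  simp only [T2boundaryPath, Prod.mk.injEq, abs_eq_max_neg] at hst
  omega

lemma T2set_sdiff_eq_image {m1 m2 n1 n2 : ℤ} (hm1 : 0 ≤ m1) (hn1 : 0 ≤ n1) (hm2 : 0 < m2)
    (hn2 : 0 < n2) :
    T2set m1 m2 n1 n2 \ T2set m1 (m2 - 1) n1 (n2 - 1) = T2boundaryPath m2 n2 ''
      Set.Icc (max (-(m1 + m2)) (m2 - n1)) (min (m1 + m2) (m2 + n1 + 2 * n2)) := by
  ext ⟨a, b, c, d⟩
  simp only [T2set, T2boundaryPath, abs_eq_max_neg, Set.mem_sdiff, Set.mem_ofPred_eq,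
    Set.mem_image, Set.mem_Icc, Prod.mk.injEq, not_or]
  constructor
  · rintro ⟨h | h | h | h, hold⟩
    exacts [⟨m2 - b, by omega⟩, ⟨m2 + a, by omega⟩, ⟨-c, by omega⟩, ⟨-m2 - a, by omega⟩]
  · rintro ⟨t, ht, rfl, rfl, rfl, rfl⟩
    omega

/-- Recursion for |²T^C| when min(m2,n2) > 0. -/
theorem stmt_6 (m1 m2 n1 n2 : ℤ) (hm1 : 0 ≤ m1) (hn1 : 0 ≤ n1)
    (h : 0 < min m2 n2) :
    ((T2set m1 m2 n1 n2).ncard : ℤ) =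
      (T2set m1 (m2 - 1) n1 (n2 - 1)).ncard +
        min (min (2 * (m1 + m2)) (2 * (n1 + n2))) (m1 + n1) + 1 := by
  have hm2 : 0 < m2 := h.trans_le (min_le_left _ _)
  have hn2 : 0 < n2 := h.trans_le (min_le_right _ _)
  have hsplit := Set.ncard_sdiff_add_ncard_of_subset
    (T2set_mono le_rfl (sub_le_self m2 zero_le_one) le_rfl (sub_le_self n2 zero_le_one))
    (T2set_finite m1 m2 n1 n2)
  rw [T2set_sdiff_eq_image hm1 hn1 hm2 hn2,
    Set.ncard_image_of_injective _ (T2boundaryPath_injective hm2 n2), ← Finset.coe_Icc,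
    Set.ncard_coe_finset, Int.card_Icc] at hsplit
  omega
end

section
/- Let m1,m2,n1,n2 ≥ 0 with min(m2,n2) = 0 and min(m1,n1) > 0, and define ²T(m1,m2,n1,n2) ⊂ Z_+^4 as the disjoint union of: {(0,b,0,d) : d ≤ n2, b ≤ n1, d+b ≤ m2}, {(a,0,0,d) : 1 ≤ a ≤ m1, d ≤ n2, d−a ≤ m2, a−2d ≤ n1}, {(0,b,c,0) : c ≥ 1, c+b ≤ m2, b+2c ≤ n1}, {(a,0,c,0) : 1 ≤ a ≤ m1, 1 ≤ c ≤ m2, a+2c ≤ n1}. Then |²T(m1,m2,n1,n2)| = |²T(m1−1,m2,n1−1,n2)| + min(n1,m2) + min(m1,n2) + 1. -/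
lemma T2set_sub_one_subset (m1 m2 n1 n2 : ℤ) :
    T2set (m1 - 1) m2 (n1 - 1) n2 ⊆ T2set m1 m2 n1 n2 := by
  rintro ⟨a, b, c, d⟩ hp
  simp only [T2set, Set.mem_ofPred_eq] at hp ⊢
  omega

lemma ncard_image_Icc_zero {α : Type*} {f : ℤ → α} {g : α → ℤ}
    (hgf : Function.LeftInverse g f) {k : ℤ} (hk : 0 ≤ k) :
    ((f '' Set.Icc 0 k).ncard : ℤ) = k + 1 := by
  rw [Set.ncard_image_of_injective _ hgf.injective, ← Finset.coe_Icc, Set.ncard_coe_finset,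
    Int.card_Icc]
  omega

def newPointOfM2Zero (m1 n1 d : ℤ) : ℤ × ℤ × ℤ × ℤ := (min m1 (n1 + 2 * d), 0, 0, d)

lemma leftInverse_newPointOfM2Zero (m1 n1 : ℤ) :
    Function.LeftInverse (fun p : ℤ × ℤ × ℤ × ℤ => p.2.2.2) (newPointOfM2Zero m1 n1) :=
  fun _ => rfl

def newPointOfN2Zero (m1 n1 s : ℤ) : ℤ × ℤ × ℤ × ℤ :=
  if 2 * s < n1 then (min m1 (n1 - 2 * s), 0, s, 0)
  else (0, 2 * s - n1, n1 - s, 0)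

lemma leftInverse_newPointOfN2Zero (m1 n1 : ℤ) :
    Function.LeftInverse (fun p : ℤ × ℤ × ℤ × ℤ => p.2.1 + p.2.2.1) (newPointOfN2Zero m1 n1) := by
  intro s
  unfold newPointOfN2Zero
  split_ifs <;> ring

lemma T2set_sdiff_eq_image_of_m2_eq_zero {m1 n1 n2 : ℤ} (hm1 : 0 < m1) (hn1 : 0 < n1) :
    T2set m1 0 n1 n2 \ T2set (m1 - 1) 0 (n1 - 1) n2 =
      newPointOfM2Zero m1 n1 '' Set.Icc 0 (min m1 n2) := by
  ext ⟨a, b, c, d⟩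
  simp only [T2set, newPointOfM2Zero, Set.mem_sdiff, Set.mem_ofPred_eq, Set.mem_image,
    Set.mem_Icc, Prod.mk.injEq]
  constructor
  · rintro ⟨hT, hT'⟩
    refine ⟨d, ?_⟩
    -- `simp` discards the pieces of the smaller set with the wrong zero pattern, so that
    -- `omega` only has to case-split on one of them.
    rcases hT with ⟨rfl, rfl, h⟩ | ⟨rfl, rfl, h⟩ | ⟨rfl, rfl, h⟩ | ⟨rfl, rfl, h⟩ <;>
      simp only [le_refl, Int.reduceLE, zero_add, add_zero, mul_zero, sub_zero, true_and,
        false_and, and_false, or_false, false_or] at hT' <;> omega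
  · rintro ⟨x, hx, h⟩
    omega

lemma T2set_sdiff_eq_image_of_n2_eq_zero {m1 m2 n1 : ℤ} (hm1 : 0 < m1) (hm2 : 0 ≤ m2)
    (hn1 : 0 < n1) :
    T2set m1 m2 n1 0 \ T2set (m1 - 1) m2 (n1 - 1) 0 =
      newPointOfN2Zero m1 n1 '' Set.Icc 0 (min n1 m2) := by
  ext ⟨a, b, c, d⟩
  simp only [T2set, Set.mem_sdiff, Set.mem_ofPred_eq, Set.mem_image, Set.mem_Icc]
  constructor
  · rintro ⟨hT, hT'⟩
    refine ⟨b + c, ?_⟩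
    unfold newPointOfN2Zero
    split_ifs <;> simp only [Prod.mk.injEq] <;>
      rcases hT with ⟨rfl, rfl, h⟩ | ⟨rfl, rfl, h⟩ | ⟨rfl, rfl, h⟩ | ⟨rfl, rfl, h⟩ <;>
      simp only [le_refl, Int.reduceLE, zero_add, add_zero, mul_zero, sub_zero, true_and,
        false_and, and_false, or_false, false_or] at hT' <;> omega
  · rintro ⟨s, hs, h⟩
    unfold newPointOfN2Zero at h
    split_ifs at h <;> simp only [Prod.mk.injEq] at h <;> omega

/-- Recursion for |²T^C| when min(m2,n2) = 0 and min(m1,n1) > 0. -/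
theorem stmt_7 (m1 m2 n1 n2 : ℤ) (hm2 : 0 ≤ m2) (hn2 : 0 ≤ n2)
    (h0 : min m2 n2 = 0) (h1 : 0 < min m1 n1) :
    ((T2set m1 m2 n1 n2).ncard : ℤ) =
      (T2set (m1 - 1) m2 (n1 - 1) n2).ncard +
        min n1 m2 + min m1 n2 + 1 := by
  have hm1 : 0 < m1 := h1.trans_le (min_le_left _ _)
  have hn1 : 0 < n1 := h1.trans_le (min_le_right _ _)
  rw [← Set.ncard_sdiff_add_ncard_of_subset (T2set_sub_one_subset m1 m2 n1 n2)
    (T2set_finite m1 m2 n1 n2)]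
  push_cast
  rcases (by omega : m2 = 0 ∨ n2 = 0) with rfl | rfl
  · rw [T2set_sdiff_eq_image_of_m2_eq_zero hm1 hn1,
      ncard_image_Icc_zero (leftInverse_newPointOfM2Zero m1 n1) (le_min hm1.le hn2)]
    omega
  · rw [T2set_sdiff_eq_image_of_n2_eq_zero hm1 hm2 hn1,
      ncard_image_Icc_zero (leftInverse_newPointOfN2Zero m1 n1) (le_min hn1.le hm2)]
    omega
end

section
/- Let m1,m2,n1,n2 ≥ 0 with min(m2,n2) > 0. Define ²S(m1,m2,n1,n2) ⊂ Z_+^3 as the union of {(b,0,d) : d ≤ min(m2,n2), b+d ≤ min(m1+m2,n1+n2), b ≤ m1+n1, 2d+b ≤ m2+n2} and {(b,c,0) : c ≥ 1, b+c ≤ min(m1+m2,n1+n2), b ≤ m2+n2, b+2c ≤ m1+n1}. Then the map sending (b,0,d) to (b,0,d+1) and (b,c,0) (c ≥ 1) to (b+2,c−1,0) is an injection from ²S(m1,m2−1,n1,n2−1) into ²S(m1,m2,n1,n2), whose image misses exactly the points of the form (b,c,0) with b ≤ 1. -/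
/-- The reduced lattice set ²S^C of the type C2 fusion polytope, a union of
triples (b,0,d) and (b,c,0) with c ≥ 1. -/
def S2set (m1 m2 n1 n2 : ℤ) : Set (ℤ × ℤ × ℤ) :=
  {p | (p.2.1 = 0 ∧ 0 ≤ p.1 ∧ 0 ≤ p.2.2 ∧ p.2.2 ≤ min m2 n2 ∧
          p.1 + p.2.2 ≤ min (m1 + m2) (n1 + n2) ∧ p.1 ≤ m1 + n1 ∧
          2 * p.2.2 + p.1 ≤ m2 + n2) ∨
       (p.2.2 = 0 ∧ 0 ≤ p.1 ∧ 1 ≤ p.2.1 ∧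
          p.1 + p.2.1 ≤ min (m1 + m2) (n1 + n2) ∧ p.1 ≤ m2 + n2 ∧
          p.1 + 2 * p.2.1 ≤ m1 + n1)}

def S2shift (p : ℤ × ℤ × ℤ) : ℤ × ℤ × ℤ :=
  if p.2.1 = 0 then (p.1, 0, p.2.2 + 1) else (p.1 + 2, p.2.1 - 1, 0)

lemma S2set_subset (m1 m2 n1 n2 : ℤ) :
    S2set m1 m2 n1 n2 ⊆ {p | 0 ≤ p.2.2 ∧ (p.2.1 = 0 ∨ p.2.2 = 0)} := by
  rintro ⟨b, c, d⟩ (⟨hc, -, hd, -⟩ | ⟨hd, -⟩) <;> simp_all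

-- Only a point `(b, 0, -1)` could collide with `(b + 2, 1, 0)`.
lemma S2shift_injOn : Set.InjOn S2shift {p | 0 ≤ p.2.2 ∧ (p.2.1 = 0 ∨ p.2.2 = 0)} := by
  rintro ⟨b, c, d⟩ ⟨hd, hcd⟩ ⟨b', c', d'⟩ ⟨hd', hcd'⟩ heq
  dsimp only [S2shift] at heq hd hcd hd' hcd'
  split_ifs at heq <;> simp only [Prod.mk.injEq] at heq ⊢ <;> omega

@[simp]
lemma S2shift_zero (b d : ℤ) : S2shift (b, 0, d) = (b, 0, d + 1) := if_pos rfl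

lemma S2shift_of_ne_zero {c : ℤ} (hc : c ≠ 0) (b d : ℤ) :
    S2shift (b, c, d) = (b + 2, c - 1, 0) := if_neg hc

lemma S2shift_mem_S2set {m1 m2 n1 n2 : ℤ} (h : 0 ≤ min m2 n2) {p : ℤ × ℤ × ℤ}
    (hp : p ∈ S2set m1 (m2 - 1) n1 (n2 - 1)) :
    S2shift p ∈ S2set m1 m2 n1 n2 \ {p | p.2.2 = 0 ∧ p.1 ≤ 1} := by
  obtain ⟨b, c, d⟩ := p
  simp only [S2set, Set.mem_ofPred_eq] at hp
  rcases hp with ⟨rfl, hp⟩ | ⟨rfl, hb, hc, hp⟩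
  · simp only [S2shift_zero, S2set, Set.mem_sdiff, Set.mem_ofPred_eq, true_and]
    omega
  · simp only [S2shift_of_ne_zero (by omega : c ≠ 0), S2set, Set.mem_sdiff, Set.mem_ofPred_eq,
      true_and]
    omega

-- Points `(b, c, 0)` are hit from `(b - 2, c + 1, 0)`, so they are missed exactly when `b ≤ 1`.
lemma exists_S2shift_eq {m1 m2 n1 n2 : ℤ} {p : ℤ × ℤ × ℤ}
    (hp : p ∈ S2set m1 m2 n1 n2 \ {p | p.2.2 = 0 ∧ p.1 ≤ 1}) :
    ∃ q ∈ S2set m1 (m2 - 1) n1 (n2 - 1), S2shift q = p := by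
  obtain ⟨b, c, d⟩ := p
  simp only [S2set, Set.mem_sdiff, Set.mem_ofPred_eq] at hp
  obtain ⟨⟨rfl, hp⟩ | ⟨rfl, hb, hc, hp⟩, hexcl⟩ := hp
  · by_cases hd : 1 ≤ d
    · refine ⟨(b, 0, d - 1), ?_, by simp⟩
      simp only [S2set, Set.mem_ofPred_eq, true_and]
      omega
    · refine ⟨(b - 2, 1, 0), ?_, ?_⟩
      · simp only [S2set, Set.mem_ofPred_eq, true_and]
        omega
      · simp only [S2shift_of_ne_zero one_ne_zero, Prod.mk.injEq]
        omega
  · refine ⟨(b - 2, c + 1, 0), ?_, ?_⟩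
    · simp only [S2set, Set.mem_ofPred_eq, true_and]
      omega
    · simp [S2shift_of_ne_zero (by omega : c + 1 ≠ 0)]

theorem stmt_9_general (m1 m2 n1 n2 : ℤ)
    (h : 0 < min m2 n2) :
    Set.InjOn
      (fun p : ℤ × ℤ × ℤ =>
        if p.2.1 = 0 then (p.1, 0, p.2.2 + 1) else (p.1 + 2, p.2.1 - 1, 0))
      (S2set m1 (m2 - 1) n1 (n2 - 1)) ∧
    (fun p : ℤ × ℤ × ℤ =>
        if p.2.1 = 0 then (p.1, 0, p.2.2 + 1) else (p.1 + 2, p.2.1 - 1, 0)) ''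
        (S2set m1 (m2 - 1) n1 (n2 - 1)) =
      S2set m1 m2 n1 n2 \ {p | p.2.2 = 0 ∧ p.1 ≤ 1} :=
  ⟨S2shift_injOn.mono (S2set_subset _ _ _ _),
    (Set.image_subset_iff.2 fun _ hp => S2shift_mem_S2set h.le hp).antisymm
      fun _ hp => exists_S2shift_eq hp⟩

/-- The map (b,0,d) ↦ (b,0,d+1), (b,c,0) ↦ (b+2,c-1,0) is an injection from
²S(m1,m2-1,n1,n2-1) into ²S(m1,m2,n1,n2) missing exactly the points (b,c,0)
with b ≤ 1. -/
theorem stmt_9 (m1 m2 n1 n2 : ℤ) (hm1 : 0 ≤ m1) (hn1 : 0 ≤ n1)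
    (h : 0 < min m2 n2) :
    Set.InjOn
      (fun p : ℤ × ℤ × ℤ =>
        if p.2.1 = 0 then (p.1, 0, p.2.2 + 1) else (p.1 + 2, p.2.1 - 1, 0))
      (S2set m1 (m2 - 1) n1 (n2 - 1)) ∧
    (fun p : ℤ × ℤ × ℤ =>
        if p.2.1 = 0 then (p.1, 0, p.2.2 + 1) else (p.1 + 2, p.2.1 - 1, 0)) ''
        (S2set m1 (m2 - 1) n1 (n2 - 1)) =
      S2set m1 m2 n1 n2 \ {p | p.2.2 = 0 ∧ p.1 ≤ 1} :=
  stmt_9_general m1 m2 n1 n2 h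
end

section
/- For non-negative integers m1,m2,n1,n2, the number of pairs (b,c) ∈ Z_+^2 with b ≤ 1, b+c ≤ min(m1+m2, n1+n2), and b+2c ≤ m1+n1 equals min(2(m1+m2), 2(n1+n2), m1+n1) + 1. -/
/-!
Writing `t = b + 2c` identifies the pairs `(b, c)` with `b ∈ {0, 1}`, `c ≥ 0` with the integers
`t ≥ 0` (binary last digit and quotient). For such pairs `b + c ≤ A` is equivalent to
`b + 2c ≤ 2A`, so all constraints collapse to `0 ≤ t ≤ min (2A) B`.
-/

theorem Int.ncard_setOf_bit_add_two_mul_le (K : ℤ) :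
    {p : ℤ × ℤ | 0 ≤ p.1 ∧ 0 ≤ p.2 ∧ p.1 ≤ 1 ∧ p.1 + 2 * p.2 ≤ K}.ncard = (K + 1).toNat := by
  have himage : {p : ℤ × ℤ | 0 ≤ p.1 ∧ 0 ≤ p.2 ∧ p.1 ≤ 1 ∧ p.1 + 2 * p.2 ≤ K} =
      (fun t : ℤ => (t % 2, t / 2)) '' Set.Icc 0 K := by
    ext ⟨b, c⟩
    simp only [Set.mem_ofPred_eq, Set.mem_image, Set.mem_Icc, Prod.mk.injEq]
    constructor
    · rintro ⟨hb, hc, hb1, hK⟩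
      exact ⟨b + 2 * c, by omega, by omega, by omega⟩
    · rintro ⟨t, ht, rfl, rfl⟩
      omega
  have hinj : Set.InjOn (fun t : ℤ => (t % 2, t / 2)) (Set.Icc 0 K) := by
    intro s _ t _ hst
    simp only [Prod.mk.injEq] at hst
    omega
  rw [himage, hinj.ncard_image, ← Finset.coe_Icc, Set.ncard_coe_finset,
    Int.card_Icc, sub_zero]

theorem setOf_bit_add_le_and_add_two_mul_le (A B : ℤ) :
    {p : ℤ × ℤ | 0 ≤ p.1 ∧ 0 ≤ p.2 ∧ p.1 ≤ 1 ∧ p.1 + p.2 ≤ A ∧ p.1 + 2 * p.2 ≤ B} =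
      {p : ℤ × ℤ | 0 ≤ p.1 ∧ 0 ≤ p.2 ∧ p.1 ≤ 1 ∧ p.1 + 2 * p.2 ≤ min (2 * A) B} := by
  ext p
  simp only [Set.mem_ofPred_eq, le_min_iff]
  omega

/-- Counting identity for ³S^C: the number of (b,c) ∈ Z_+² with b ≤ 1,
b+c ≤ min(m1+m2, n1+n2) and b+2c ≤ m1+n1 is min(2(m1+m2), 2(n1+n2), m1+n1)+1. -/
theorem stmt_10 (m1 m2 n1 n2 : ℤ) (hm1 : 0 ≤ m1) (hm2 : 0 ≤ m2)
    (hn1 : 0 ≤ n1) (hn2 : 0 ≤ n2) :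
    (Set.ncard {p : ℤ × ℤ | 0 ≤ p.1 ∧ 0 ≤ p.2 ∧ p.1 ≤ 1 ∧
        p.1 + p.2 ≤ min (m1 + m2) (n1 + n2) ∧ p.1 + 2 * p.2 ≤ m1 + n1} : ℤ) =
      min (min (2 * (m1 + m2)) (2 * (n1 + n2))) (m1 + n1) + 1 := by
  rw [setOf_bit_add_le_and_add_two_mul_le, Int.ncard_setOf_bit_add_two_mul_le,
    mul_min_of_nonneg _ _ zero_le_two]
  exact Int.toNat_of_nonneg (by omega)
end

section
/- Let m1,m2,n1,n2 ≥ 0 with min(m2,n2) > 0. Define ²S(m1,m2,n1,n2) as the union of {(b,0,d) ∈ Z_+^3 : d ≤ min(m2,n2), b+d ≤ min(m1+m2,n1+n2), b ≤ m1+n1, 2d+b ≤ m2+n2} and {(b,c,0) ∈ Z_+^3 : c ≥ 1, b+c ≤ min(m1+m2,n1+n2), b ≤ m2+n2, b+2c ≤ m1+n1}. Then |²S(m1,m2,n1,n2)| = |²S(m1,m2−1,n1,n2−1)| + min(2(m1+m2), 2(n1+n2), m1+n1) + 1. -/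
namespace S2set

variable {m1 m2 n1 n2 : ℤ}

lemma mk_mem_iff {b c d : ℤ} :
    (b, c, d) ∈ S2set m1 m2 n1 n2 ↔
      (c = 0 ∧ 0 ≤ b ∧ 0 ≤ d ∧ d ≤ min m2 n2 ∧ b + d ≤ min (m1 + m2) (n1 + n2) ∧
          b ≤ m1 + n1 ∧ 2 * d + b ≤ m2 + n2) ∨
        (d = 0 ∧ 0 ≤ b ∧ 1 ≤ c ∧ b + c ≤ min (m1 + m2) (n1 + n2) ∧ b ≤ m2 + n2 ∧
          b + 2 * c ≤ m1 + n1) :=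
  Iff.rfl

lemma finite (m1 m2 n1 n2 : ℤ) : (S2set m1 m2 n1 n2).Finite := by
  set M := min (m1 + m2) (n1 + n2)
  refine ((Set.finite_Icc 0 M).prod ((Set.finite_Icc 0 M).prod (Set.finite_Icc 0 M))).subset ?_
  rintro ⟨b, c, d⟩ hp
  simp only [mk_mem_iff] at hp
  simp only [Set.mem_prod, Set.mem_Icc]
  omega

def shift (p : ℤ × ℤ × ℤ) : ℤ × ℤ × ℤ :=
  if p.2.1 = 0 then (p.1, p.2.1, p.2.2 + 1) else p

lemma shift_injective : Function.Injective shift := by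
  rintro ⟨b, c, d⟩ ⟨b', c', d'⟩ h
  simp only [shift] at h
  split_ifs at h <;> simp only [Prod.mk.injEq] at h ⊢ <;> omega

lemma mem_shift_image_iff {S : Set (ℤ × ℤ × ℤ)} {b c d : ℤ} :
    (b, c, d) ∈ shift '' S ↔ (c = 0 ∧ (b, 0, d - 1) ∈ S) ∨ (c ≠ 0 ∧ (b, c, d) ∈ S) := by
  constructor
  · rintro ⟨⟨b', c', d'⟩, hS, hp⟩
    by_cases hc' : c' = 0
    · simp only [shift, hc', if_true, Prod.mk.injEq] at hp
      obtain ⟨rfl, rfl, rfl⟩ := hp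
      subst hc'
      simpa using hS
    · simp only [shift, hc', if_false, Prod.mk.injEq] at hp
      obtain ⟨rfl, rfl, rfl⟩ := hp
      exact Or.inr ⟨hc', hS⟩
  · rintro (⟨rfl, hS⟩ | ⟨hc, hS⟩)
    · exact ⟨_, hS, by simp [shift]⟩
    · exact ⟨_, hS, if_neg hc⟩

lemma shift_image_subset :
    shift '' S2set m1 (m2 - 1) n1 (n2 - 1) ⊆ S2set m1 m2 n1 n2 := by
  rintro ⟨b, c, d⟩ hp
  simp only [mem_shift_image_iff, mk_mem_iff] at hp ⊢
  omega

lemma mk_mem_sdiff_shift_image_iff (hm2 : 0 ≤ m2) (hn2 : 0 ≤ n2) {b c d : ℤ} :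
    (b, c, d) ∈ S2set m1 m2 n1 n2 \ shift '' S2set m1 (m2 - 1) n1 (n2 - 1) ↔
      (c = 0 ∧ d = 0 ∧ 0 ≤ b ∧ b ≤ min (min (min (m1 + m2) (n1 + n2)) (m1 + n1)) (m2 + n2)) ∨
        (d = 0 ∧ 0 ≤ b ∧ 1 ≤ c ∧ b + c ≤ min (m1 + m2) (n1 + n2) ∧ b ≤ m2 + n2 ∧
          b + 2 * c ≤ m1 + n1 ∧ (b + c = min (m1 + m2) (n1 + n2) ∨ m2 + n2 - 1 ≤ b)) := by
  rcases eq_or_ne c 0 with rfl | hc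
  · simp only [Set.mem_sdiff, mem_shift_image_iff, mk_mem_iff, le_min_iff, ne_eq,
      not_true_eq_false, true_and, false_and, and_false, or_false, Int.reduceLE]
    omega
  · simp only [Set.mem_sdiff, mem_shift_image_iff, mk_mem_iff, le_min_iff, hc, true_and,
      false_and, false_or]
    omega

/-- Small weights `t` are attained on the axis `c = 0`, large ones on the face `b + c = M`, and the
remaining ones on the face `b = m2 + n2` or `b = m2 + n2 - 1`, according to the parity of `t`. -/
lemma surjOn_weight (hm2 : 0 < m2) (hn2 : 0 < n2) :
    Set.SurjOn (fun p : ℤ × ℤ × ℤ => p.1 + 2 * p.2.1)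
      (S2set m1 m2 n1 n2 \ shift '' S2set m1 (m2 - 1) n1 (n2 - 1))
      (Set.Icc 0 (min (min (2 * (m1 + m2)) (2 * (n1 + n2))) (m1 + n1))) := by
  intro t ht
  rw [Set.mem_Icc] at ht
  have mem := fun b c =>
    (mk_mem_sdiff_shift_image_iff (m1 := m1) (n1 := n1) hm2.le hn2.le (b := b) (c := c) (d := 0)).2
  set M := min (m1 + m2) (n1 + n2)
  set s := m2 + n2
  by_cases h_axis : t ≤ min (min M (m1 + n1)) s
  · exact ⟨(t, 0, 0), mem _ _ (by omega), by simp⟩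
  by_cases h_face : max (M + 1) (2 * M - s) ≤ t
  · exact ⟨(2 * M - t, t - M, 0), mem _ _ (by omega), by simp only; ring⟩
  obtain ⟨k, hk | hk⟩ := Int.even_or_odd' (t - s)
  · exact ⟨(s, k, 0), mem _ _ (by omega), by simp only; omega⟩
  · exact ⟨(s - 1, k + 1, 0), mem _ _ (by omega), by simp only; omega⟩

lemma bijOn_weight (hm2 : 0 < m2) (hn2 : 0 < n2) :
    Set.BijOn (fun p : ℤ × ℤ × ℤ => p.1 + 2 * p.2.1)
      (S2set m1 m2 n1 n2 \ shift '' S2set m1 (m2 - 1) n1 (n2 - 1))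
      (Set.Icc 0 (min (min (2 * (m1 + m2)) (2 * (n1 + n2))) (m1 + n1))) := by
  refine ⟨?_, ?_, surjOn_weight hm2 hn2⟩
  · rintro ⟨b, c, d⟩ hp
    rw [mk_mem_sdiff_shift_image_iff hm2.le hn2.le] at hp
    simp only [Set.mem_Icc]
    omega
  · rintro ⟨b, c, d⟩ hp ⟨b', c', d'⟩ hp' hw
    rw [mk_mem_sdiff_shift_image_iff hm2.le hn2.le] at hp hp'
    simp only [Prod.mk.injEq] at hw ⊢
    omega

lemma ncard_sdiff_shift_image (hm1 : 0 ≤ m1) (hn1 : 0 ≤ n1) (hm2 : 0 < m2) (hn2 : 0 < n2) :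
    ((S2set m1 m2 n1 n2 \ shift '' S2set m1 (m2 - 1) n1 (n2 - 1)).ncard : ℤ) =
      min (min (2 * (m1 + m2)) (2 * (n1 + n2))) (m1 + n1) + 1 := by
  rw [(bijOn_weight hm2 hn2).ncard_eq, ← Finset.coe_Icc, Set.ncard_coe_finset, Int.card_Icc]
  omega

end S2set

open S2set in
/-- Recursion for |²S^C| when min(m2,n2) > 0. -/
theorem stmt_11 (m1 m2 n1 n2 : ℤ) (hm1 : 0 ≤ m1) (hn1 : 0 ≤ n1)
    (h : 0 < min m2 n2) :
    ((S2set m1 m2 n1 n2).ncard : ℤ) =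
      (S2set m1 (m2 - 1) n1 (n2 - 1)).ncard +
        min (min (2 * (m1 + m2)) (2 * (n1 + n2))) (m1 + n1) + 1 := by
  obtain ⟨hm2, hn2⟩ := lt_min_iff.mp h
  rw [← Set.ncard_sdiff_add_ncard_of_subset shift_image_subset (S2set.finite _ _ _ _),
    Set.ncard_image_of_injective _ shift_injective, Nat.cast_add,
    ncard_sdiff_shift_image hm1 hn1 hm2 hn2]
  ring
end

section
/- Let m1 ≥ 0, and suppose m2 = 0 = n1 and n2 > 0. Define S(m1,0,0,n2) = {(b,c,0) ∈ Z_+^3 : b+c ≤ min(m1, n2), b ≤ n2, b+2c ≤ m1} and similarly S(m1,0,0,n2−1) with n2 replaced by n2−1. Then |S(m1,0,0,n2)| − |S(m1,0,0,n2−1)| = (min(n2, m1−n2) + 1)_+, where x_+ = max(x,0). -/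
/-- Type C2, case m2 = 0 = n1, n2 > 0: with
S(m1,n2) = {(b,c,0) ∈ Z_+³ : b+c ≤ min(m1,n2), b ≤ n2, b+2c ≤ m1},
|S(m1,n2)| − |S(m1,n2−1)| = (min(n2, m1−n2) + 1)_+. -/
theorem stmt_12 (m1 n2 : ℤ) (hm1 : 0 ≤ m1) (hn2 : 0 < n2)
    (S : ℤ → Set (ℤ × ℤ × ℤ))
    (hS : ∀ k, S k = {p : ℤ × ℤ × ℤ | 0 ≤ p.1 ∧ 0 ≤ p.2.1 ∧ p.2.2 = 0 ∧
        p.1 + p.2.1 ≤ min m1 k ∧ p.1 ≤ k ∧ p.1 + 2 * p.2.1 ≤ m1}) :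
    ((S n2).ncard : ℤ) - (S (n2 - 1)).ncard =
      max (min n2 (m1 - n2) + 1) 0 := by
  have hfin : ∀ k, (S k).Finite := by
    intro k
    apply Set.Finite.subset ((Set.finite_Icc (0:ℤ) m1).prod
      ((Set.finite_Icc (0:ℤ) m1).prod (Set.finite_singleton 0)))
    rw [hS k]
    rintro ⟨b, c, z⟩ ⟨hb, hc, hz, h1, h2, h3⟩
    simp only [Set.mem_prod, Set.mem_Icc, Set.mem_singleton_iff]
    exact ⟨⟨hb, by linarith⟩, ⟨hc, by linarith⟩, hz⟩
  by_cases h : n2 ≤ m1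
  · set t := min n2 (m1 - n2) with ht
    have ht0 : 0 ≤ t := le_min hn2.le (by linarith)
    set D : Set (ℤ × ℤ × ℤ) := (fun c => (n2 - c, c, (0:ℤ))) '' (Set.Icc 0 t) with hDdef
    have hU : S n2 = S (n2 - 1) ∪ D := by
      ext ⟨b, c, z⟩
      simp only [hS, hDdef, Set.mem_setOf_eq, Set.mem_union, Set.mem_image, Set.mem_Icc,
        Prod.mk.injEq]
      constructor
      · rintro ⟨hb, hc, hz, h1, h2, h3⟩
        by_cases hbc : b + c ≤ n2 - 1
        · exact Or.inl ⟨hb, hc, hz, by omega, by omega, h3⟩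
        · exact Or.inr ⟨c, ⟨hc, by omega⟩, by omega, rfl, hz.symm⟩
      · rintro (⟨hb, hc, hz, h1, h2, h3⟩ | ⟨c', ⟨hc0, hc1⟩, e1, e2, e3⟩)
        · exact ⟨hb, hc, hz, by omega, by omega, h3⟩
        · subst e2; refine ⟨by omega, hc0, e3.symm, by omega, by omega, by omega⟩
    have hdisj : Disjoint (S (n2 - 1)) D := by
      rw [Set.disjoint_left]
      rintro ⟨b, c, z⟩ hmem hmem'
      simp only [hS, Set.mem_setOf_eq] at hmem
      simp only [hDdef, Set.mem_image, Set.mem_Icc, Prod.mk.injEq] at hmem'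
      obtain ⟨hb, hc, hz, h1, h2, h3⟩ := hmem
      obtain ⟨c', ⟨hc0, hc1⟩, e1, e2, e3⟩ := hmem'
      omega
    have hDfin : D.Finite := (Set.finite_Icc 0 t).image _
    have hDcard : (D.ncard : ℤ) = t + 1 := by
      have hinj : Set.InjOn (fun c => (n2 - c, c, (0:ℤ))) (Set.Icc 0 t) := by
        intro x _ y _ hxy
        simpa using congrArg (fun p => p.2.1) hxy
      rw [hDdef, Set.ncard_image_of_injOn hinj, ← Finset.coe_Icc, Set.ncard_coe_finset,
        Int.card_Icc]
      omega
    have hcard : (S n2).ncard = (S (n2 - 1)).ncard + D.ncard := by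
      rw [hU, Set.ncard_union_eq hdisj (hfin _) hDfin]
    rw [hcard]
    push_cast
    omega
  · have hEq : S n2 = S (n2 - 1) := by
      ext ⟨b, c, z⟩
      simp only [hS, Set.mem_setOf_eq]
      constructor <;> rintro ⟨hb, hc, hz, h1, h2, h3⟩ <;>
        exact ⟨hb, hc, hz, by omega, by omega, h3⟩
    rw [hEq, sub_self]
    omega
end

section
/- Let m1, m2, n1 ≥ 0 and define ¹T(m1,m2,n1) as the set of (a,b,c,d,e) ∈ Z_+^5 with a+b+c+d+e ≤ n1, c ≤ 1, b+e−d ≤ m2, e ≤ m2, a−2b+2d−e ≤ m1, c+2d−e ≤ m1. Then the map (a,b,c,d,e) ↦ (a,b,c,d,e+1) is an injection from ¹T(m1+1, m2−1, n1−1) into ¹T(m1,m2,n1) (assuming m2,n1 ≥ 1), whose image is exactly the set of points with e > 0. -/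
/-- The slice ¹T^G of the Littelmann-type set for G2 (f = 0); components
of p are (a,b,c,d,e). -/
def T1G (m1 m2 n1 : ℤ) : Set (ℤ × ℤ × ℤ × ℤ × ℤ) :=
  {p | 0 ≤ p.1 ∧ 0 ≤ p.2.1 ∧ 0 ≤ p.2.2.1 ∧ 0 ≤ p.2.2.2.1 ∧ 0 ≤ p.2.2.2.2 ∧
    p.1 + p.2.1 + p.2.2.1 + p.2.2.2.1 + p.2.2.2.2 ≤ n1 ∧ p.2.2.1 ≤ 1 ∧
    p.2.1 + p.2.2.2.2 - p.2.2.2.1 ≤ m2 ∧ p.2.2.2.2 ≤ m2 ∧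
    p.1 - 2 * p.2.1 + 2 * p.2.2.2.1 - p.2.2.2.2 ≤ m1 ∧
    p.2.2.1 + 2 * p.2.2.2.1 - p.2.2.2.2 ≤ m1}

def shiftLast : (ℤ × ℤ × ℤ × ℤ × ℤ) ≃ (ℤ × ℤ × ℤ × ℤ × ℤ) where
  toFun p := (p.1, p.2.1, p.2.2.1, p.2.2.2.1, p.2.2.2.2 + 1)
  invFun p := (p.1, p.2.1, p.2.2.1, p.2.2.2.1, p.2.2.2.2 - 1)
  left_inv p := by simp
  right_inv p := by simp

theorem shiftLast_mem_T1G_iff (m1 m2 n1 : ℤ) (p : ℤ × ℤ × ℤ × ℤ × ℤ) :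
    shiftLast p ∈ T1G m1 m2 n1 ∧ 0 < (shiftLast p).2.2.2.2 ↔
      p ∈ T1G (m1 + 1) (m2 - 1) (n1 - 1) := by
  obtain ⟨a, b, c, d, e⟩ := p
  simp only [shiftLast, T1G, Equiv.coe_fn_mk, Set.mem_ofPred_eq]
  omega

theorem stmt_14_general (m1 m2 n1 : ℤ) :
    Set.InjOn
      (fun p : ℤ × ℤ × ℤ × ℤ × ℤ => (p.1, p.2.1, p.2.2.1, p.2.2.2.1, p.2.2.2.2 + 1))
      (T1G (m1 + 1) (m2 - 1) (n1 - 1)) ∧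
    (fun p : ℤ × ℤ × ℤ × ℤ × ℤ => (p.1, p.2.1, p.2.2.1, p.2.2.2.1, p.2.2.2.2 + 1)) ''
        (T1G (m1 + 1) (m2 - 1) (n1 - 1)) =
      {p ∈ T1G m1 m2 n1 | 0 < p.2.2.2.2} := by
  refine ⟨shiftLast.injective.injOn, ?_⟩
  change shiftLast '' _ = _
  rw [shiftLast.image_eq_preimage_symm]
  ext p
  simpa using (shiftLast_mem_T1G_iff m1 m2 n1 (shiftLast.symm p)).symm

/-- (a,b,c,d,e) ↦ (a,b,c,d,e+1) is an injection
¹T(m1+1, m2-1, n1-1) → ¹T(m1,m2,n1) with image the points with e > 0. -/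
theorem stmt_14 (m1 m2 n1 : ℤ) (hm1 : 0 ≤ m1) (hm2 : 1 ≤ m2) (hn1 : 1 ≤ n1) :
    Set.InjOn
      (fun p : ℤ × ℤ × ℤ × ℤ × ℤ => (p.1, p.2.1, p.2.2.1, p.2.2.2.1, p.2.2.2.2 + 1))
      (T1G (m1 + 1) (m2 - 1) (n1 - 1)) ∧
    (fun p : ℤ × ℤ × ℤ × ℤ × ℤ => (p.1, p.2.1, p.2.2.1, p.2.2.2.1, p.2.2.2.2 + 1)) ''
        (T1G (m1 + 1) (m2 - 1) (n1 - 1)) =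
      {p ∈ T1G m1 m2 n1 | 0 < p.2.2.2.2} :=
  stmt_14_general m1 m2 n1
end

section
/- For non-negative integers m1, n1 with min(m1,n1) ≥ 2, let ³T(m1, n1) be the disjoint union of Y¹ = {(b,c,y) ∈ Z_+^3 : 2b+c+y ≤ n1, c ≤ 1, c+2b+2y ≤ m1, y+b ≥ 0} and Y² = {(a,y) ∈ Z_+^2 : a−y < n1−m1, a+2y < m1} (the case m2 = 0). Then |³T(m1,n1)| = |³T(m1−2, n1−1)| + min(n1, 2m1) + 1. -/
/-! Both components are cut by the last coordinate `y`: the points with `y ≥ 1` are, after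
lowering `y` by one, exactly the points of the components for `(m1 - 2, n1 - 1)`. The points with
`y = 0` are counted directly: in `Y¹` they are `(b, c, 0)` with `t = 2b + c ∈ [0, min m1 n1]`, in
`Y²` they are `(a, 0)` with `0 ≤ a < min (n1 - m1) m1`, and for `m1, n1 ≥ 0` these two counts add
up to `min n1 (2 m1) + 1`. -/

/-- Y¹ component of ³T^G in the case m2 = 0. -/
def Y1G (m1 n1 : ℤ) : Set (ℤ × ℤ × ℤ) :=
  {p | 0 ≤ p.1 ∧ 0 ≤ p.2.1 ∧ 0 ≤ p.2.2 ∧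
    2 * p.1 + p.2.1 + p.2.2 ≤ n1 ∧ p.2.1 ≤ 1 ∧
    p.2.1 + 2 * p.1 + 2 * p.2.2 ≤ m1 ∧ 0 ≤ p.2.2 + p.1}

/-- Y² component of ³T^G in the case m2 = 0. -/
def Y2G (m1 n1 : ℤ) : Set (ℤ × ℤ) :=
  {p | 0 ≤ p.1 ∧ 0 ≤ p.2 ∧ p.1 - p.2 < n1 - m1 ∧ p.1 + 2 * p.2 < m1}

theorem Set.ncard_eq_ncard_add_ncard_inter_of_sdiff_eq_image {α β : Type*} {s u : Set α}
    {t : Set β} {f : β → α} (hs : s.Finite) (hf : Function.Injective f) (h : s \ u = f '' t) :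
    s.ncard = t.ncard + (s ∩ u).ncard := by
  rw [← Set.ncard_inter_add_ncard_sdiff_eq_ncard s u hs, h, Set.ncard_image_of_injective _ hf,
    add_comm]

theorem Int.ncard_Icc (a b : ℤ) : (Set.Icc a b).ncard = (b + 1 - a).toNat := by
  rw [← Finset.coe_Icc, Set.ncard_coe_finset, Int.card_Icc]

theorem Int.ncard_Ico (a b : ℤ) : (Set.Ico a b).ncard = (b - a).toNat := by
  rw [← Finset.coe_Ico, Set.ncard_coe_finset, Int.card_Ico]

namespace Y1G

theorem finite (m n : ℤ) : (Y1G m n).Finite :=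
  (Set.finite_Icc (0 : ℤ × ℤ × ℤ) (n, 1, n)).subset fun _ hp => by
    simp only [Y1G, Set.mem_ofPred_eq] at hp
    simp only [Set.mem_Icc, Prod.le_def, Prod.fst_zero, Prod.snd_zero]
    omega

theorem sdiff_eq_image_shift (m n : ℤ) :
    Y1G m n \ {p | p.2.2 = 0} =
      (fun p : ℤ × ℤ × ℤ => (p.1, p.2.1, p.2.2 + 1)) '' Y1G (m - 2) (n - 1) := by
  ext ⟨b, c, y⟩
  simp only [Y1G, Set.mem_sdiff, Set.mem_ofPred_eq, Set.mem_image, Prod.exists, Prod.mk.injEq]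
  constructor
  · intro hp
    exact ⟨b, c, y - 1, by omega, rfl, rfl, by omega⟩
  · rintro ⟨b, c, y, hp, rfl, rfl, rfl⟩
    omega

theorem inter_eq_image (m n : ℤ) :
    Y1G m n ∩ {p | p.2.2 = 0} =
      (fun t : ℤ => (t / 2, t % 2, (0 : ℤ))) '' Set.Icc 0 (min m n) := by
  ext ⟨b, c, y⟩
  simp only [Y1G, Set.mem_inter_iff, Set.mem_ofPred_eq, Set.mem_image, Set.mem_Icc, Prod.mk.injEq]
  constructor
  · intro hp
    exact ⟨2 * b + c, by omega, by omega, by omega, by omega⟩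
  · rintro ⟨t, ht, rfl, rfl, rfl⟩
    omega

theorem ncard_inter (m n : ℤ) :
    (Y1G m n ∩ {p | p.2.2 = 0}).ncard = (min m n + 1).toNat := by
  have hinj : Function.Injective fun t : ℤ => (t / 2, t % 2, (0 : ℤ)) := by
    intro s t hst
    simp only [Prod.mk.injEq] at hst
    omega
  rw [inter_eq_image, Set.ncard_image_of_injective _ hinj, Int.ncard_Icc, sub_zero]

theorem ncard_eq (m n : ℤ) :
    (Y1G m n).ncard = (Y1G (m - 2) (n - 1)).ncard + (min m n + 1).toNat := by
  rw [← ncard_inter]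
  refine Set.ncard_eq_ncard_add_ncard_inter_of_sdiff_eq_image (finite m n) ?_
    (sdiff_eq_image_shift m n)
  intro p q hpq
  simp only [Prod.mk.injEq] at hpq
  ext <;> omega

end Y1G

namespace Y2G

theorem finite (m n : ℤ) : (Y2G m n).Finite :=
  (Set.finite_Icc (0 : ℤ × ℤ) (m, m)).subset fun _ hp => by
    simp only [Y2G, Set.mem_ofPred_eq] at hp
    simp only [Set.mem_Icc, Prod.le_def, Prod.fst_zero, Prod.snd_zero]
    omega

theorem sdiff_eq_image_shift (m n : ℤ) :
    Y2G m n \ {p | p.2 = 0} = (fun p : ℤ × ℤ => (p.1, p.2 + 1)) '' Y2G (m - 2) (n - 1) := by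
  ext ⟨a, y⟩
  simp only [Y2G, Set.mem_sdiff, Set.mem_ofPred_eq, Set.mem_image, Prod.exists, Prod.mk.injEq]
  constructor
  · intro hp
    exact ⟨a, y - 1, by omega, rfl, by omega⟩
  · rintro ⟨a, y, hp, rfl, rfl⟩
    omega

theorem inter_eq_image (m n : ℤ) :
    Y2G m n ∩ {p | p.2 = 0} = (fun a : ℤ => (a, (0 : ℤ))) '' Set.Ico 0 (min (n - m) m) := by
  ext ⟨a, y⟩
  simp only [Y2G, Set.mem_inter_iff, Set.mem_ofPred_eq, Set.mem_image, Set.mem_Ico, Prod.mk.injEq]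
  constructor
  · intro hp
    exact ⟨a, by omega, rfl, by omega⟩
  · rintro ⟨a, ha, rfl, rfl⟩
    omega

theorem ncard_inter (m n : ℤ) :
    (Y2G m n ∩ {p | p.2 = 0}).ncard = (min (n - m) m).toNat := by
  rw [inter_eq_image, Set.ncard_image_of_injective _ (Prod.mk_left_injective 0), Int.ncard_Ico,
    sub_zero]

theorem ncard_eq (m n : ℤ) :
    (Y2G m n).ncard = (Y2G (m - 2) (n - 1)).ncard + (min (n - m) m).toNat := by
  rw [← ncard_inter]
  refine Set.ncard_eq_ncard_add_ncard_inter_of_sdiff_eq_image (finite m n) ?_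
    (sdiff_eq_image_shift m n)
  intro p q hpq
  simp only [Prod.mk.injEq] at hpq
  ext <;> omega

end Y2G

/-- Recursion |³T(m1,n1)| = |³T(m1-2,n1-1)| + min(n1,2m1) + 1 for min(m1,n1) ≥ 2. -/
theorem stmt_16 (m1 n1 : ℤ) (h : 2 ≤ min m1 n1) :
    ((Y1G m1 n1).ncard + (Y2G m1 n1).ncard : ℤ) =
      ((Y1G (m1 - 2) (n1 - 1)).ncard + (Y2G (m1 - 2) (n1 - 1)).ncard : ℤ) +
        min n1 (2 * m1) + 1 := by
  rw [Y1G.ncard_eq, Y2G.ncard_eq]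
  push_cast
  omega
end

section
/- For non-negative integers m1, n1 and M = min(m1,n1) ≥ 2, one has Σ_{i=0}^{M} min(M+1−i, ⌊(m1+n1−2i)/3⌋+1) = Σ_{i=0}^{min(m1−1,n1)} min(min(m1−1,n1)−i, ⌊(m1+n1−2i)/3⌋) + min(n1, 2m1) + 1, using the fact that m1−i < ⌊(m1+n1−2i)/3⌋+1 if and only if 2m1−n1 ≤ i ≤ m1. -/
/-!
Since `min (a + 1) (b + 1) = min a b + 1`, the left side is the first sum on the right taken
up to `min m1 n1`, plus `min m1 n1 + 1`. If `n1 < m1` this is the identity. If `m1 ≤ n1`, the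
first argument `m1 - i` of the `min` is one larger than on the right; this changes the term
exactly when `m1 - i ≤ ⌊(m1 + n1 - 2i)/3⌋`, i.e. when `2 m1 - n1 ≤ i`, and there are
`min n1 (2 m1) - m1` such `i < m1`.
-/

open Finset

lemma min_succ_left_eq_add_ite (a b : ℕ) :
    min (a + 1) b = min a b + if a < b then 1 else 0 := by
  split_ifs <;> omega

lemma sum_range_succ_min_sub_succ (n : ℕ) (f : ℕ → ℕ) :
    ∑ i ∈ range (n + 1), min (n + 1 - i) (f i + 1) =
      ∑ i ∈ range (n + 1), min (n - i) (f i) + (n + 1) := by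
  have hterm : ∀ i ∈ range (n + 1), min (n + 1 - i) (f i + 1) = min (n - i) (f i) + 1 := by
    intro i hi
    rw [mem_range] at hi
    rw [show n + 1 - i = n - i + 1 by omega, Nat.succ_min_succ]
  rw [sum_congr rfl hterm, sum_add_distrib, sum_const, card_range, smul_eq_mul, mul_one]

lemma card_filter_le_range (k m : ℕ) : #{i ∈ range m | k ≤ i} = m - k := by
  rw [range_eq_Ico, Ico_filter_le, Nat.card_Ico]
  omega

lemma sub_le_div_three_iff {m n i : ℕ} (hi : i < m) :
    m - i ≤ (m + n - 2 * i) / 3 ↔ 2 * m - n ≤ i := by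
  rw [Nat.le_div_iff_mul_le (by norm_num)]
  omega

lemma sum_range_min_sub_div_three (m n : ℕ) :
    ∑ i ∈ range m, min (m - i) ((m + n - 2 * i) / 3) =
      ∑ i ∈ range m, min (m - 1 - i) ((m + n - 2 * i) / 3) + (m - (2 * m - n)) := by
  have hterm : ∀ i ∈ range m, min (m - i) ((m + n - 2 * i) / 3) =
      min (m - 1 - i) ((m + n - 2 * i) / 3) + if 2 * m - n ≤ i then 1 else 0 := by
    intro i hi
    rw [mem_range] at hi
    have hlt_iff : m - 1 - i < (m + n - 2 * i) / 3 ↔ 2 * m - n ≤ i := by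
      rw [Nat.lt_iff_add_one_le, show m - 1 - i + 1 = m - i by omega]
      exact sub_le_div_three_iff hi
    rw [show m - i = m - 1 - i + 1 by omega, min_succ_left_eq_add_ite]
    simp only [hlt_iff]
  rw [sum_congr rfl hterm, sum_add_distrib, sum_boole, card_filter_le_range, Nat.cast_id]

theorem stmt_17_general (m1 n1 : ℕ) :
    ∑ i ∈ Finset.range (min m1 n1 + 1),
        min (min m1 n1 + 1 - i) ((m1 + n1 - 2 * i) / 3 + 1) =
      (∑ i ∈ Finset.range (min (m1 - 1) n1 + 1),
          min (min (m1 - 1) n1 - i) ((m1 + n1 - 2 * i) / 3)) +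
        min n1 (2 * m1) + 1 := by
  rw [sum_range_succ_min_sub_succ]
  rcases lt_or_ge n1 m1 with hlt | hle
  · rw [min_eq_right hlt.le, min_eq_right (by omega : n1 ≤ m1 - 1), min_eq_left (by omega)]
    ring
  · obtain _ | k := m1
    · simp
    · rw [Nat.add_sub_cancel, min_eq_left hle, min_eq_left (by omega : k ≤ n1), sum_range_succ,
        Nat.sub_self, Nat.zero_min, add_zero, sum_range_min_sub_div_three, Nat.add_sub_cancel]
      omega

/-- Summation identity used in the base step (m2 = 0) of the G2 bijection. -/
theorem stmt_17 (m1 n1 : ℕ) (h : 2 ≤ min m1 n1) :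
    ∑ i ∈ Finset.range (min m1 n1 + 1),
        min (min m1 n1 + 1 - i) ((m1 + n1 - 2 * i) / 3 + 1) =
      (∑ i ∈ Finset.range (min (m1 - 1) n1 + 1),
          min (min (m1 - 1) n1 - i) ((m1 + n1 - 2 * i) / 3)) +
        min n1 (2 * m1) + 1 :=
  stmt_17_general m1 n1
end

section
/- Let m1, m2, n1 ≥ 0 with m2 > 0. The number of elements of the union of the sets Z¹ = {(c,d) ∈ Z_+^2 : 2c+3d ≤ m1+n1, min(m1+m2−1, n1) < c+d ≤ min(m1+m2, n1)}, Z² = {(b,c) ∈ Z_+^2 : 2c+b < m1+n1, b < m2−1, min(m1+m2−1,n1) ≤ b+c < min(m1+m2,n1)}, and Z³ = {c ∈ Z_+ : c ≤ min(m1, n1−m2)} (these three being counted disjointly) equals: 0 if n1 < m2; n1−m2+1 if m2 ≤ n1 < 2m1+3m2; and 2(m1+m2)+1 if n1 ≥ 2m1+3m2. -/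
theorem Int.ncard_image_Icc {α : Type*} {f : ℤ → α} (hf : f.Injective) (a b : ℤ) :
    (f '' Set.Icc a b).ncard = (b + 1 - a).toNat := by
  rw [Set.ncard_image_of_injective _ hf, Int.ncard_Icc]

section

variable (m1 m2 n1 : ℤ)

theorem ncard_Z1 (hm2 : 0 ≤ m2) :
    (Set.ncard {p : ℤ × ℤ | 0 ≤ p.1 ∧ 0 ≤ p.2 ∧ 2 * p.1 + 3 * p.2 ≤ m1 + n1 ∧
        min (m1 + m2 - 1) n1 < p.1 + p.2 ∧ p.1 + p.2 ≤ min (m1 + m2) n1}) =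
      (min (m1 + m2) (n1 - m1 - 2 * m2) + 1).toNat := by
  have hZ : {p : ℤ × ℤ | 0 ≤ p.1 ∧ 0 ≤ p.2 ∧ 2 * p.1 + 3 * p.2 ≤ m1 + n1 ∧
        min (m1 + m2 - 1) n1 < p.1 + p.2 ∧ p.1 + p.2 ≤ min (m1 + m2) n1} =
      (fun d => (m1 + m2 - d, d)) '' Set.Icc 0 (min (m1 + m2) (n1 - m1 - 2 * m2)) := by
    ext ⟨c, d⟩
    simp only [Set.mem_ofPred_eq, Set.mem_image, Set.mem_Icc, Prod.mk.injEq]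
    constructor
    · rintro ⟨hc, hd, hweight, hlo, hhi⟩
      exact ⟨d, ⟨hd, by omega⟩, by omega, rfl⟩
    · rintro ⟨d, hd, rfl, rfl⟩
      omega
  have hinj : Function.Injective fun d : ℤ => (m1 + m2 - d, d) :=
    fun _ _ h => congrArg Prod.snd h
  rw [hZ, Int.ncard_image_Icc hinj]
  congr 1
  ring

theorem ncard_Z2 (hm1 : 0 ≤ m1) :
    (Set.ncard {p : ℤ × ℤ | 0 ≤ p.1 ∧ 0 ≤ p.2 ∧ 2 * p.2 + p.1 < m1 + n1 ∧
        p.1 < m2 - 1 ∧ min (m1 + m2 - 1) n1 ≤ p.1 + p.2 ∧ p.1 + p.2 < min (m1 + m2) n1}) =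
      (m2 - 1 - max 0 (m1 + 2 * m2 - 1 - n1)).toNat := by
  have hZ : {p : ℤ × ℤ | 0 ≤ p.1 ∧ 0 ≤ p.2 ∧ 2 * p.2 + p.1 < m1 + n1 ∧
        p.1 < m2 - 1 ∧ min (m1 + m2 - 1) n1 ≤ p.1 + p.2 ∧ p.1 + p.2 < min (m1 + m2) n1} =
      (fun b => (b, m1 + m2 - 1 - b)) '' Set.Icc (max 0 (m1 + 2 * m2 - 1 - n1)) (m2 - 2) := by
    ext ⟨b, c⟩
    simp only [Set.mem_ofPred_eq, Set.mem_image, Set.mem_Icc, Prod.mk.injEq]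
    constructor
    · rintro ⟨hb, hc, hweight, hbm, hlo, hhi⟩
      exact ⟨b, ⟨by omega, by omega⟩, rfl, by omega⟩
    · rintro ⟨b, hb, rfl, rfl⟩
      omega
  have hinj : Function.Injective fun b : ℤ => (b, m1 + m2 - 1 - b) :=
    fun _ _ h => congrArg Prod.fst h
  rw [hZ, Int.ncard_image_Icc hinj]
  congr 1
  ring

theorem ncard_Z3 :
    (Set.ncard {c : ℤ | 0 ≤ c ∧ c ≤ min m1 (n1 - m2)}) = (min m1 (n1 - m2) + 1).toNat :=
  (Int.ncard_Icc 0 _).trans (by rw [sub_zero])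

end

theorem stmt_18_general (m1 m2 n1 : ℤ) (hm1 : 0 ≤ m1) (hm2 : 0 < m2) :
    ((Set.ncard {p : ℤ × ℤ | 0 ≤ p.1 ∧ 0 ≤ p.2 ∧ 2 * p.1 + 3 * p.2 ≤ m1 + n1 ∧
          min (m1 + m2 - 1) n1 < p.1 + p.2 ∧ p.1 + p.2 ≤ min (m1 + m2) n1}) +
      (Set.ncard {p : ℤ × ℤ | 0 ≤ p.1 ∧ 0 ≤ p.2 ∧ 2 * p.2 + p.1 < m1 + n1 ∧
          p.1 < m2 - 1 ∧ min (m1 + m2 - 1) n1 ≤ p.1 + p.2 ∧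
          p.1 + p.2 < min (m1 + m2) n1}) +
      (Set.ncard {c : ℤ | 0 ≤ c ∧ c ≤ min m1 (n1 - m2)}) : ℤ) =
      if n1 < m2 then 0
      else if n1 < 2 * m1 + 3 * m2 then n1 - m2 + 1
      else 2 * (m1 + m2) + 1 := by
  rw [ncard_Z1 m1 m2 n1 hm2.le, ncard_Z2 m1 m2 n1 hm1, ncard_Z3]
  split_ifs <;> omega

/-- Increment count k in the inductive step of the G2 cardinality comparison. -/
theorem stmt_18 (m1 m2 n1 : ℤ) (hm1 : 0 ≤ m1) (hm2 : 0 < m2) (hn1 : 0 ≤ n1) :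
    ((Set.ncard {p : ℤ × ℤ | 0 ≤ p.1 ∧ 0 ≤ p.2 ∧ 2 * p.1 + 3 * p.2 ≤ m1 + n1 ∧
          min (m1 + m2 - 1) n1 < p.1 + p.2 ∧ p.1 + p.2 ≤ min (m1 + m2) n1}) +
      (Set.ncard {p : ℤ × ℤ | 0 ≤ p.1 ∧ 0 ≤ p.2 ∧ 2 * p.2 + p.1 < m1 + n1 ∧
          p.1 < m2 - 1 ∧ min (m1 + m2 - 1) n1 ≤ p.1 + p.2 ∧
          p.1 + p.2 < min (m1 + m2) n1}) +
      (Set.ncard {c : ℤ | 0 ≤ c ∧ c ≤ min m1 (n1 - m2)}) : ℤ) =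
      if n1 < m2 then 0
      else if n1 < 2 * m1 + 3 * m2 then n1 - m2 + 1
      else 2 * (m1 + m2) + 1 :=
  stmt_18_general m1 m2 n1 hm1 hm2
end

section
/- Let m1, m2, n1 ≥ 0 with m2 > 0. The cardinality of the union of {(b,c) ∈ Z_+^2 : 2b+c ≤ min(m2+n1, m1+2m2), c ≤ 1, b ≥ m2} and {a ∈ Z_+ : a < min(n1−m2−m1, m1+2m2)} equals: 0 if n1 < m2; n1−m2+1 if m2 ≤ n1 < 2m1+3m2; and 2(m1+m2)+1 if n1 ≥ 2m1+3m2. (Here the first set has cardinality 0 if n1 < m2 and min(n1−m2, m1)+1 otherwise; the second has cardinality 0 if n1 < m1+m2 and min(n1−m2−m1, m1+2m2) otherwise.) -/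
/-!
The pairs `(b, c)` with `c ∈ {0, 1}` correspond, via `(b, c) ↦ 2 * b + c` (division by `2` with
remainder), to the integers of an interval, so both sets are counted as integer intervals; the case
split then compares the two bounds of each `min`.
-/

namespace G2Count

lemma ncard_setOf_nonneg_lt (K : ℤ) : (Set.ncard {a : ℤ | 0 ≤ a ∧ a < K} : ℤ) = K.toNat := by
  have hIco : {a : ℤ | 0 ≤ a ∧ a < K} = Set.Ico 0 K := rfl
  rw [hIco, ← Finset.coe_Ico, Set.ncard_coe_finset, Int.card_Ico]
  omega

lemma image_two_mul_add_eq_Icc (m M : ℤ) (hm : 0 ≤ m) :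
    (fun p : ℤ × ℤ => 2 * p.1 + p.2) ''
        {p : ℤ × ℤ | 0 ≤ p.1 ∧ 0 ≤ p.2 ∧ 2 * p.1 + p.2 ≤ M ∧ p.2 ≤ 1 ∧ m ≤ p.1} =
      Set.Icc (2 * m) M := by
  ext v
  constructor
  · rintro ⟨⟨b, c⟩, ⟨-, hc, hle, -, hb⟩, rfl⟩
    exact ⟨by dsimp only; omega, hle⟩
  · rintro ⟨hlo, hhi⟩
    exact ⟨(v / 2, v % 2), ⟨by omega, by omega, by omega, by omega, by omega⟩, by dsimp only; omega⟩

lemma injOn_two_mul_add (S : Set (ℤ × ℤ)) (hS : ∀ p ∈ S, 0 ≤ p.2 ∧ p.2 ≤ 1) :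
    S.InjOn (fun p : ℤ × ℤ => 2 * p.1 + p.2) := by
  rintro ⟨b, c⟩ hbc ⟨b', c'⟩ hbc' h
  obtain ⟨hc, hc1⟩ := hS _ hbc
  obtain ⟨hc', hc1'⟩ := hS _ hbc'
  simp only at h
  rw [Prod.mk.injEq]
  omega

lemma ncard_setOf_two_mul_add_le (m M : ℤ) (hm : 0 ≤ m) :
    (Set.ncard {p : ℤ × ℤ | 0 ≤ p.1 ∧ 0 ≤ p.2 ∧ 2 * p.1 + p.2 ≤ M ∧ p.2 ≤ 1 ∧ m ≤ p.1} : ℤ) =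
      (M - 2 * m + 1).toNat := by
  rw [← (injOn_two_mul_add _ fun p hp => ⟨hp.2.1, hp.2.2.2.1⟩).ncard_image,
    image_two_mul_add_eq_Icc m M hm, ← Finset.coe_Icc, Set.ncard_coe_finset, Int.card_Icc]
  omega

end G2Count

open G2Count in
theorem stmt_19_general (m1 m2 n1 : ℤ) (hm1 : 0 ≤ m1) (hm2 : 0 < m2) :
    ((Set.ncard {p : ℤ × ℤ | 0 ≤ p.1 ∧ 0 ≤ p.2 ∧
          2 * p.1 + p.2 ≤ min (m2 + n1) (m1 + 2 * m2) ∧ p.2 ≤ 1 ∧ m2 ≤ p.1}) +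
      (Set.ncard {a : ℤ | 0 ≤ a ∧ a < min (n1 - m2 - m1) (m1 + 2 * m2)}) : ℤ) =
      if n1 < m2 then 0
      else if n1 < 2 * m1 + 3 * m2 then n1 - m2 + 1
      else 2 * (m1 + m2) + 1 := by
  rw [ncard_setOf_two_mul_add_le _ _ hm2.le, ncard_setOf_nonneg_lt]
  split_ifs <;> omega

/-- Increment count m in the inductive step for ³T^G in type G2. -/
theorem stmt_19 (m1 m2 n1 : ℤ) (hm1 : 0 ≤ m1) (hm2 : 0 < m2) (hn1 : 0 ≤ n1) :
    ((Set.ncard {p : ℤ × ℤ | 0 ≤ p.1 ∧ 0 ≤ p.2 ∧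
          2 * p.1 + p.2 ≤ min (m2 + n1) (m1 + 2 * m2) ∧ p.2 ≤ 1 ∧ m2 ≤ p.1}) +
      (Set.ncard {a : ℤ | 0 ≤ a ∧ a < min (n1 - m2 - m1) (m1 + 2 * m2)}) : ℤ) =
      if n1 < m2 then 0
      else if n1 < 2 * m1 + 3 * m2 then n1 - m2 + 1
      else 2 * (m1 + m2) + 1 :=
  stmt_19_general m1 m2 n1 hm1 hm2
end
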